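/- arXiv:1411.7944 — 2 statements merged into one kernel-verified Lean document; each statement's English description precedes it below -/
import Mathlib

section
/- Let A be a real n×n matrix, let P_1, …, P_m be symmetric positive definite n×n matrices, and suppose there exist scalars α_{rs} > 0 such that for every r ∈ {1,…,m}: A^T P_r + P_r A ≺ Σ_{s≠r} α_{rs} (P_s − P_r). Define V(x) = max_{1≤r≤m} x^T P_r x. Then for every x ≠ 0 the function t ↦ V(exp(tA) x) is strictly decreasing on [0, ∞); in particular V(exp(tA)x) < V(x) for all t > 0 and all x ≠ 0. -/
open Matrix NormedSpace

/-- The piece-wise quadratic function `V(x) = max_{1 ≤ r ≤ m} xᵀ P_r x`. -/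
noncomputable def pwMax {n m : ℕ} (hm : 0 < m)
    (P : Fin m → Matrix (Fin n) (Fin n) ℝ) (x : Fin n → ℝ) : ℝ :=
  Finset.univ.sup' (Finset.univ_nonempty_iff.mpr ⟨⟨0, hm⟩⟩)
    (fun r : Fin m => x ⬝ᵥ P r *ᵥ x)

/-!
Along a trajectory `y(t) = exp(tA) x`, `V(y(t))` is the upper envelope of the quadratics
`q_r(t) = y(t)ᵀ P_r y(t)`, and `q_r' = yᵀ (Aᵀ P_r + P_r A) y`. If `r` is active at time `t`
(i.e. `q_r(t) = V(y(t))`) and `y(t) ≠ 0`, the matrix inequality gives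
`q_r'(t) < ∑_{s ≠ r} α_{rs} (q_s(t) - q_r(t)) ≤ 0`. So every active quadratic, and hence the
envelope, drops strictly just to the right of every time, and a continuous function with this
property is strictly decreasing.
-/

open Filter Topology

lemma HasDerivAt.eventually_lt_right_of_neg {f : ℝ → ℝ} {f' t : ℝ} (hf : HasDerivAt f f' t)
    (hf' : f' < 0) : ∀ᶠ v in 𝓝[>] t, f v < f t := by
  filter_upwards [hf.hasDerivWithinAt.limsup_slope_le' (lt_irrefl t) hf', self_mem_nhdsWithin]
    with v hslope hv
  exact (slope_neg_iff_of_le hv.le).mp hslope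

lemma Finset.eventually_sup'_lt_right {κ : Type*} {s : Finset κ} (hs : s.Nonempty)
    {g : κ → ℝ → ℝ} {g' : κ → ℝ} {t : ℝ} (hg : ∀ r ∈ s, HasDerivAt (g r) (g' r) t)
    (hg' : ∀ r ∈ s, (∀ q ∈ s, g q t ≤ g r t) → g' r < 0) :
    ∀ᶠ v in 𝓝[>] t, s.sup' hs (g · v) < s.sup' hs (g · t) := by
  simp only [Finset.sup'_lt_iff, eventually_all_finset]
  intro r hr
  rcases (Finset.le_sup' (g · t) hr).lt_or_eq with hlt | heq
  · exact nhdsWithin_le_nhds ((hg r hr).continuousAt.eventually_lt continuousAt_const hlt)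
  · have hmax q (hq : q ∈ s) : g q t ≤ g r t := (Finset.le_sup' (g · t) hq).trans_eq heq.symm
    filter_upwards [(hg r hr).eventually_lt_right_of_neg (hg' r hr hmax)] with v hv
    exact hv.trans_eq heq

lemma strictAnti_of_eventually_lt_right {f : ℝ → ℝ} (hf : Continuous f)
    (h : ∀ t, ∀ᶠ v in 𝓝[>] t, f v < f t) : StrictAnti f := by
  -- fencing `f` on `[a, b]` by the constant barrier `f a`
  have hanti : Antitone f := fun a b hab =>
    image_le_of_liminf_slope_right_le_deriv_boundary (B := fun _ => f a) (B' := 0)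
      hf.continuousOn le_rfl continuousOn_const (fun _ _ => hasDerivWithinAt_const _ _ _)
      (fun x _ r hr => Eventually.frequently <| by
        filter_upwards [h x, self_mem_nhdsWithin] with z hz hxz
        exact ((slope_neg_iff_of_le (le_of_lt hxz)).mpr hz).trans hr)
      ⟨hab, le_rfl⟩
  intro a b hab
  obtain ⟨z, hz, -, hzb⟩ := ((h a).and (Ioo_mem_nhdsGT hab)).exists
  exact (hanti hzb.le).trans_lt hz

section QuadraticForm

variable {ι : Type*} [Fintype ι]

lemma HasDerivAt.dotProduct_mulVec_self {y : ℝ → ι → ℝ} {y' : ι → ℝ} {t : ℝ}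
    (P : Matrix ι ι ℝ) (hy : HasDerivAt y y' t) :
    HasDerivAt (fun u => y u ⬝ᵥ P *ᵥ y u) (y t ⬝ᵥ P *ᵥ y' + y' ⬝ᵥ P *ᵥ y t) t :=
  ((dotProductBilin ℝ ℝ).compl₂ P.mulVecLin).toContinuousBilinearMap.hasDerivAt_of_bilinear
    (fun _ => hy) (fun _ => hy)

lemma dotProduct_transpose_mul_add_mul_mulVec (A P : Matrix ι ι ℝ) (y : ι → ℝ) :
    y ⬝ᵥ (Aᵀ * P + P * A) *ᵥ y = y ⬝ᵥ P *ᵥ (A *ᵥ y) + (A *ᵥ y) ⬝ᵥ P *ᵥ y := by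
  rw [add_mulVec, dotProduct_add, ← mulVec_mulVec, ← mulVec_mulVec, dotProduct_mulVec y Aᵀ,
    vecMul_transpose, add_comm]

lemma hasDerivAt_exp_smul_mulVec [DecidableEq ι] (A : Matrix ι ι ℝ) (x : ι → ℝ) (t : ℝ) :
    HasDerivAt (fun u : ℝ => exp (u • A) *ᵥ x) (A *ᵥ (exp (t • A) *ᵥ x)) t := by
  open scoped Matrix.Norms.Operator in
  let L : Matrix ι ι ℝ →L[ℝ] ι → ℝ :=
    (LinearMap.applyₗ x ∘ₗ Matrix.toLin'.toLinearMap).toContinuousLinearMap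
  rw [Matrix.mulVec_mulVec]
  exact L.hasFDerivAt.comp_hasDerivAt t (hasDerivAt_exp_smul_const' A t)

lemma hasDerivAt_dotProduct_mulVec_exp_smul [DecidableEq ι] (A P : Matrix ι ι ℝ) (x : ι → ℝ)
    (t : ℝ) :
    HasDerivAt (fun u : ℝ => (exp (u • A) *ᵥ x) ⬝ᵥ P *ᵥ (exp (u • A) *ᵥ x))
      ((exp (t • A) *ᵥ x) ⬝ᵥ (Aᵀ * P + P * A) *ᵥ (exp (t • A) *ᵥ x)) t := by
  rw [dotProduct_transpose_mul_add_mul_mulVec]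
  exact (hasDerivAt_exp_smul_mulVec A x t).dotProduct_mulVec_self P

lemma exp_mulVec_ne_zero [DecidableEq ι] (A : Matrix ι ι ℝ) {x : ι → ℝ} (hx : x ≠ 0) :
    exp A *ᵥ x ≠ 0 := by
  simpa using (mulVec_injective_iff_isUnit.mpr (Matrix.isUnit_exp A)).ne hx

lemma dotProduct_mulVec_neg_of_forall_le {κ : Type*} [Fintype κ] [DecidableEq κ]
    {P : κ → Matrix ι ι ℝ} {Q : Matrix ι ι ℝ} {α : κ → ℝ} (hα : ∀ s, 0 ≤ α s) {r : κ}
    (hQ : ((∑ s ∈ Finset.univ.erase r, α s • (P s - P r)) - Q).PosDef) {y : ι → ℝ} (hy : y ≠ 0)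
    (hmax : ∀ s, y ⬝ᵥ P s *ᵥ y ≤ y ⬝ᵥ P r *ᵥ y) :
    y ⬝ᵥ Q *ᵥ y < 0 := by
  have hpos := hQ.dotProduct_mulVec_pos hy
  rw [star_trivial, sub_mulVec, dotProduct_sub, sub_pos, sum_mulVec, dotProduct_sum] at hpos
  refine hpos.trans_le (Finset.sum_nonpos fun s _ => ?_)
  rw [smul_mulVec, dotProduct_smul, sub_mulVec, dotProduct_sub, smul_eq_mul]
  exact mul_nonpos_of_nonneg_of_nonpos (hα s) (sub_nonpos.mpr (hmax s))

end QuadraticForm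

theorem pwMax_strictly_decreasing_along_flow_general
    (n m : ℕ) (hm : 0 < m) (A : Matrix (Fin n) (Fin n) ℝ)
    (P : Fin m → Matrix (Fin n) (Fin n) ℝ)
    (α : Fin m → Fin m → ℝ) (hα : ∀ r s, 0 < α r s)
    (hineq : ∀ r : Fin m,
      ((∑ s ∈ Finset.univ.erase r, α r s • (P s - P r)) -
        (Aᵀ * P r + P r * A)).PosDef) :
    ∀ x : Fin n → ℝ, x ≠ 0 →
      StrictAntiOn (fun t : ℝ => pwMax hm P (NormedSpace.exp (t • A) *ᵥ x)) (Set.Ici 0) ∧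
      ∀ t : ℝ, 0 < t → pwMax hm P (NormedSpace.exp (t • A) *ᵥ x) < pwMax hm P x := by
  intro x hx
  have hderiv r t := hasDerivAt_dotProduct_mulVec_exp_smul A (P r) x t
  have hcont : Continuous fun t : ℝ => pwMax hm P (exp (t • A) *ᵥ x) :=
    Continuous.finset_sup'_apply _ fun r _ =>
      continuous_iff_continuousAt.2 fun t => (hderiv r t).continuousAt
  have hdrop t :
      ∀ᶠ v in 𝓝[>] t, pwMax hm P (exp (v • A) *ᵥ x) < pwMax hm P (exp (t • A) *ᵥ x) :=
    Finset.eventually_sup'_lt_right _ (fun r _ => hderiv r t) fun r _ hmax =>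
      dotProduct_mulVec_neg_of_forall_le (fun s => (hα r s).le) (hineq r)
        (exp_mulVec_ne_zero _ hx) fun s => hmax s (Finset.mem_univ s)
  have hV := strictAnti_of_eventually_lt_right hcont hdrop
  exact ⟨hV.strictAntiOn _, fun t ht => by simpa using hV ht⟩

/-- under the BMI condition (8), the piece-wise quadratic function
`V(x) = max_r xᵀ P_r x` is strictly decreasing along every nonzero trajectory of
`ẋ = Ax`; in particular `V(exp(tA)x) < V(x)` for all `t > 0` and `x ≠ 0`. -/
theorem pwMax_strictly_decreasing_along_flow
    (n m : ℕ) (hm : 0 < m) (A : Matrix (Fin n) (Fin n) ℝ)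
    (P : Fin m → Matrix (Fin n) (Fin n) ℝ)
    (hPsymm : ∀ r, (P r).IsSymm) (hPpos : ∀ r, (P r).PosDef)
    (α : Fin m → Fin m → ℝ) (hα : ∀ r s, 0 < α r s)
    (hineq : ∀ r : Fin m,
      ((∑ s ∈ Finset.univ.erase r, α r s • (P s - P r)) -
        (Aᵀ * P r + P r * A)).PosDef) :
    ∀ x : Fin n → ℝ, x ≠ 0 →
      StrictAntiOn (fun t : ℝ => pwMax hm P (NormedSpace.exp (t • A) *ᵥ x)) (Set.Ici 0) ∧
      ∀ t : ℝ, 0 < t → pwMax hm P (NormedSpace.exp (t • A) *ᵥ x) < pwMax hm P x :=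
  pwMax_strictly_decreasing_along_flow_general n m hm A P α hα hineq
end

section
/- Let A_1, …, A_N be real n×n matrices. For each positive integer m, let F_m ⊆ ℝ denote the set of τ ≥ 0 for which the bilinear matrix inequality conditions with m quadratic forms are feasible, and define τ_[m] := inf F_m (with inf ∅ = +∞). Then: (a) F_m ⊆ F_{m+1} for every m, hence the sequence (τ_[m]) is non-increasing; (b) each F_m is upward closed in [0, ∞), i.e. if τ ∈ F_m and δ ≥ 0 then τ + δ ∈ F_m; and (c) if some F_m is nonempty, the sequence (τ_[m]) is bounded below by 0 and therefore converges to a limit τ̄ = lim_{m→∞} τ_[m]. -/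
/-!
Pulling a feasible family back along a surjection `Fin m' → Fin m`, with every weight split
evenly over its fibre, shows that more quadratic forms never hurt. For the dwell time: along
`x(t) = exp (t • A) x` the Lyapunov inequalities say that the vector `g(t)` of the values
`x(t) ⬝ᵥ P s *ᵥ x(t)` satisfies `g' ≤ Q *ᵥ g`, where `Q` is the Metzler rate matrix of the `α`'s.
Since `ν(t) = exp ((δ - t) • Qᵀ) *ᵥ μ` solves `ν' = -Qᵀ *ᵥ ν` and stays nonnegative, `ν ⬝ᵥ g` is
antitone. Hence a jump inequality with convex weights `μ` at dwell time `τ` yields one at `τ + δ`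
with the weights `exp (δ • Qᵀ) *ᵥ μ`, which are convex again because `exp (δ • Q)` is row
stochastic. Finally, an eventually antitone sequence in `EReal` converges.
-/

open Matrix NormedSpace

/-- Feasibility of the BMI dwell-time conditions with `m` quadratic pieces at
dwell time `τ ≥ 0`. -/
def BMIFeasible {n N : ℕ} (A : Fin N → Matrix (Fin n) (Fin n) ℝ) (m : ℕ) (τ : ℝ) :
    Prop :=
  0 ≤ τ ∧
  ∃ (P : Fin N → Fin m → Matrix (Fin n) (Fin n) ℝ)
    (α : Fin N → Fin m → Fin m → ℝ)
    (γ : Fin N → Fin m → Fin N → Fin m → Fin m → ℝ),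
    (∀ i r, (P i r).IsSymm) ∧ (∀ i r, (P i r).PosDef) ∧
    (∀ i r s, 0 < α i r s) ∧ (∀ j q i r s, 0 ≤ γ j q i r s) ∧
    (∀ j q i r, ∑ s, γ j q i r s < 1) ∧
    (∀ i r,
      ((∑ s ∈ Finset.univ.erase r, α i r s • (P i s - P i r)) -
        ((A i)ᵀ * P i r + P i r * A i)).PosDef) ∧
    (∀ i j, i ≠ j → ∀ q r,
      ((P i r + ∑ s ∈ Finset.univ.erase r, γ j q i r s • (P i s - P i r)) -
        (exp (τ • (A i)ᵀ) * P j q * exp (τ • A i))).PosDef)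

/-- `τ_[m] = inf F_m`, computed in `EReal` so that `inf ∅ = +∞`. -/
noncomputable def tauBound {n N : ℕ} (A : Fin N → Matrix (Fin n) (Fin n) ℝ)
    (m : ℕ) : EReal :=
  sInf ((fun τ : ℝ => (τ : EReal)) '' {τ : ℝ | BMIFeasible A m τ})

theorem HasDerivAt.dotProduct {𝕜 ι : Type*} [NontriviallyNormedField 𝕜] [Fintype ι]
    {u v : 𝕜 → ι → 𝕜} {u' v' : ι → 𝕜} {t : 𝕜} (hu : HasDerivAt u u' t)
    (hv : HasDerivAt v v' t) :
    HasDerivAt (fun s => u s ⬝ᵥ v s) (u' ⬝ᵥ v t + u t ⬝ᵥ v') t := by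
  show HasDerivAt (fun s => ∑ i, u s i * v s i) (∑ i, u' i * v t i + ∑ i, u t i * v' i) t
  rw [← Finset.sum_add_distrib]
  exact HasDerivAt.fun_sum fun i _ => (hasDerivAt_pi.1 hu i).mul (hasDerivAt_pi.1 hv i)

namespace Matrix

def IsMetzler {ι : Type*} (M : Matrix ι ι ℝ) : Prop :=
  ∀ i j, i ≠ j → 0 ≤ M i j

theorem IsMetzler.smul {ι : Type*} {M : Matrix ι ι ℝ} (hM : M.IsMetzler) {c : ℝ}
    (hc : 0 ≤ c) :
    (c • M).IsMetzler :=
  fun i j hij => mul_nonneg hc (hM i j hij)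

theorem IsMetzler.transpose {ι : Type*} {M : Matrix ι ι ℝ} (hM : M.IsMetzler) :
    Mᵀ.IsMetzler :=
  fun i j hij => hM j i hij.symm

theorem mul_apply_self_le_mulVec_apply {ι : Type*} [Fintype ι] {S : Matrix ι ι ℝ}
    (hS : ∀ i j, 0 ≤ S i j) {μ : ι → ℝ} (hμ : 0 ≤ μ) (r : ι) : S r r * μ r ≤ (S *ᵥ μ) r :=
  Finset.single_le_sum (f := fun s => S r s * μ s) (fun s _ => mul_nonneg (hS r s) (hμ s))
    (Finset.mem_univ r)

variable {ι : Type*} [Fintype ι] [DecidableEq ι]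

section Exp

attribute [local instance] Matrix.linftyOpNormedRing Matrix.linftyOpNormedAlgebra

theorem one_apply_le_exp_apply {N : Matrix ι ι ℝ} (hN : ∀ i j, 0 ≤ N i j) (i j : ι) :
    (1 : Matrix ι ι ℝ) i j ≤ exp N i j := by
  have hpow : ∀ k i j, 0 ≤ (N ^ k) i j := by
    intro k
    induction k with
    | zero => exact zero_le_one_elem
    | succ k ih =>
      intro i j
      rw [pow_succ, mul_apply]
      exact Finset.sum_nonneg fun l _ => mul_nonneg (ih i l) (hN l j)
  have hsum := Pi.hasSum.1 (Pi.hasSum.1 (exp_series_hasSum_exp' (𝕂 := ℝ) N) i) j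
  refine (le_hasSum hsum 0 fun k _ => ?_).trans_eq' (by simp)
  exact mul_nonneg (by positivity) (hpow k i j)

theorem exp_eq_real_exp_neg_smul_exp_add (M : Matrix ι ι ℝ) (c : ℝ) :
    exp M = Real.exp (-c) • exp (M + c • 1) := by
  have hcomm : Commute ((-c) • (1 : Matrix ι ι ℝ)) (M + c • 1) :=
    (Commute.one_left _).smul_left _
  have hscalar : exp ((-c) • (1 : Matrix ι ι ℝ)) = Real.exp (-c) • 1 := by
    rw [smul_one_eq_diagonal, exp_diagonal, smul_one_eq_diagonal, Real.exp_eq_exp_ℝ]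
    congr 1
    exact funext (Pi.coe_exp _)
  rw [← smul_one_mul, ← hscalar, ← Matrix.exp_add_of_commute _ _ hcomm, neg_smul]
  congr 1
  abel

theorem hasDerivAt_exp_smul_mulVec (A : Matrix ι ι ℝ) (x : ι → ℝ) (t : ℝ) :
    HasDerivAt (fun u : ℝ => exp (u • A) *ᵥ x) (A *ᵥ (exp (t • A) *ᵥ x)) t := by
  let L : Matrix ι ι ℝ →L[ℝ] ι → ℝ :=
    LinearMap.toContinuousLinearMap ((LinearMap.applyₗ x).comp Matrix.toLin'.toLinearMap)
  rw [mulVec_mulVec]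
  exact L.hasFDerivAt.comp_hasDerivAt t (hasDerivAt_exp_smul_const' A t)

theorem exp_mulVec_eq_self {M : Matrix ι ι ℝ} {v : ι → ℝ} (hv : M *ᵥ v = 0) :
    exp M *ᵥ v = v := by
  have hderiv (t : ℝ) : deriv (fun u : ℝ => exp (u • M) *ᵥ v) t = 0 := by
    rw [(hasDerivAt_exp_smul_mulVec M v t).deriv, mulVec_mulVec,
      ((Commute.refl M).smul_right t).exp_right.eq, ← mulVec_mulVec, hv, mulVec_zero]
  simpa using is_const_of_deriv_eq_zero
    (fun t => (hasDerivAt_exp_smul_mulVec M v t).differentiableAt) hderiv 1 0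

end Exp

theorem IsMetzler.exists_pos_mul_one_apply_le_exp_apply {M : Matrix ι ι ℝ}
    (hM : M.IsMetzler) :
    ∃ c > 0, ∀ i j, c * (1 : Matrix ι ι ℝ) i j ≤ exp M i j := by
  set d := ∑ i, |M i i|
  have hshift : ∀ i j, 0 ≤ (M + d • 1) i j := by
    intro i j
    rcases eq_or_ne i j with rfl | hij
    · have : |M i i| ≤ d := Finset.single_le_sum (f := fun i => |M i i|)
        (fun _ _ => abs_nonneg _) (Finset.mem_univ i)
      simp only [add_apply, smul_apply, one_apply_eq, smul_eq_mul, mul_one]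
      linarith [neg_abs_le (M i i)]
    · simpa [one_apply_ne hij] using hM i j hij
  refine ⟨Real.exp (-d), Real.exp_pos _, fun i j => ?_⟩
  rw [exp_eq_real_exp_neg_smul_exp_add M d, smul_apply, smul_eq_mul]
  exact mul_le_mul_of_nonneg_left (one_apply_le_exp_apply hshift i j) (Real.exp_pos _).le

theorem IsMetzler.exp_apply_nonneg {M : Matrix ι ι ℝ} (hM : M.IsMetzler) (i j : ι) :
    0 ≤ exp M i j := by
  obtain ⟨c, hc, h⟩ := hM.exists_pos_mul_one_apply_le_exp_apply
  exact (mul_nonneg hc.le (zero_le_one_elem i j)).trans (h i j)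

theorem IsMetzler.exp_apply_self_pos {M : Matrix ι ι ℝ} (hM : M.IsMetzler) (i : ι) :
    0 < exp M i i := by
  obtain ⟨c, hc, h⟩ := hM.exists_pos_mul_one_apply_le_exp_apply
  simpa using hc.trans_le (by simpa using h i i)

theorem IsMetzler.exp_smul_mem_rowStochastic {Q : Matrix ι ι ℝ} (hQ : Q.IsMetzler)
    (hQ1 : Q *ᵥ 1 = 0) {t : ℝ} (ht : 0 ≤ t) : exp (t • Q) ∈ rowStochastic ℝ ι :=
  mem_rowStochastic.2 ⟨(hQ.smul ht).exp_apply_nonneg,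
    exp_mulVec_eq_self (by rw [smul_mulVec, hQ1, smul_zero])⟩

theorem IsMetzler.dotProduct_le_of_hasDerivAt {Q : Matrix ι ι ℝ} (hQ : Q.IsMetzler)
    {g g' : ℝ → ι → ℝ} (hg : ∀ t, HasDerivAt g (g' t) t) (hg' : ∀ t, g' t ≤ Q *ᵥ g t)
    {μ : ι → ℝ} (hμ : 0 ≤ μ) {δ : ℝ} (hδ : 0 ≤ δ) :
    μ ⬝ᵥ g δ ≤ (exp (δ • Qᵀ) *ᵥ μ) ⬝ᵥ g 0 := by
  set ν : ℝ → ι → ℝ := fun t => exp ((δ - t) • Qᵀ) *ᵥ μ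
  have hν (t : ℝ) : HasDerivAt ν (-(Qᵀ *ᵥ ν t)) t := by
    have := (hasDerivAt_exp_smul_mulVec Qᵀ μ (δ - t)).scomp t ((hasDerivAt_id t).const_sub δ)
    rwa [neg_one_smul] at this
  have hν_nonneg (t : ℝ) (ht : t ≤ δ) : 0 ≤ ν t := fun i =>
    Finset.sum_nonneg fun j _ =>
      mul_nonneg ((hQ.transpose.smul (sub_nonneg.2 ht)).exp_apply_nonneg i j) (hμ j)
  have hf (t : ℝ) := (hν t).dotProduct (hg t)
  have hf_nonpos (t : ℝ) (ht : t ≤ δ) : -(Qᵀ *ᵥ ν t) ⬝ᵥ g t + ν t ⬝ᵥ g' t ≤ 0 := by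
    have := dotProduct_le_dotProduct_of_nonneg_left (hg' t) (hν_nonneg t ht)
    rw [dotProduct_mulVec, ← mulVec_transpose] at this
    rw [neg_dotProduct]
    linarith
  have hanti : AntitoneOn (fun t => ν t ⬝ᵥ g t) (Set.Icc 0 δ) := by
    refine antitoneOn_of_deriv_nonpos (convex_Icc 0 δ)
      (fun t _ => (hf t).continuousAt.continuousWithinAt)
      (fun t _ => (hf t).differentiableAt.differentiableWithinAt) fun t ht => ?_
    rw [interior_Icc] at ht
    rw [(hf t).deriv]
    exact hf_nonpos t ht.2.le
  simpa [ν] using hanti (Set.left_mem_Icc.2 hδ) (Set.right_mem_Icc.2 hδ) hδ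

theorem dotProduct_transpose_mul_mul_mulVec {n : Type*} [Fintype n] (B M : Matrix n n ℝ)
    (x : n → ℝ) :
    x ⬝ᵥ (Bᵀ * M * B) *ᵥ x = (B *ᵥ x) ⬝ᵥ M *ᵥ (B *ᵥ x) := by
  rw [Matrix.mul_assoc, ← mulVec_mulVec, dotProduct_mulVec, vecMul_transpose, ← mulVec_mulVec]

theorem dotProduct_sum_smul_mulVec {n ι : Type*} [Fintype n] [Fintype ι]
    (P : ι → Matrix n n ℝ) (w : ι → ℝ) (x : n → ℝ) :
    x ⬝ᵥ (∑ s, w s • P s) *ᵥ x = w ⬝ᵥ fun s => x ⬝ᵥ P s *ᵥ x := by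
  simp only [sum_mulVec, dotProduct_sum, smul_mulVec, dotProduct_smul, smul_eq_mul]
  rfl

section QuadraticForm

variable {n : Type*} [Fintype n] [DecidableEq n]

theorem hasDerivAt_dotProduct_exp_smul_mulVec (A P : Matrix n n ℝ) (x : n → ℝ) (t : ℝ) :
    HasDerivAt (fun u : ℝ => (exp (u • A) *ᵥ x) ⬝ᵥ P *ᵥ (exp (u • A) *ᵥ x))
      ((exp (t • A) *ᵥ x) ⬝ᵥ (Aᵀ * P + P * A) *ᵥ (exp (t • A) *ᵥ x)) t := by
  have hy := hasDerivAt_exp_smul_mulVec A x t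
  have hPy := (mulVecLin P).toContinuousLinearMap.hasFDerivAt.comp_hasDerivAt t hy
  set y := exp (t • A) *ᵥ x
  have hsum :
      (A *ᵥ y) ⬝ᵥ P *ᵥ y + y ⬝ᵥ P *ᵥ (A *ᵥ y) = y ⬝ᵥ (Aᵀ * P + P * A) *ᵥ y := by
    rw [add_mulVec, dotProduct_add, ← mulVec_mulVec, ← mulVec_mulVec, dotProduct_mulVec y Aᵀ,
      vecMul_transpose, add_comm]
  rw [← hsum]
  exact hy.dotProduct hPy

theorem dotProduct_exp_smul_mulVec_le {A : Matrix n n ℝ} {P : ι → Matrix n n ℝ}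
    {Q : Matrix ι ι ℝ} (hQ : Q.IsMetzler)
    (hLyap : ∀ r, (∑ s, Q r s • P s - (Aᵀ * P r + P r * A)).PosSemidef)
    {μ : ι → ℝ} (hμ : 0 ≤ μ) {δ : ℝ} (hδ : 0 ≤ δ) (x : n → ℝ) :
    (exp (δ • A) *ᵥ x) ⬝ᵥ (∑ s, μ s • P s) *ᵥ (exp (δ • A) *ᵥ x)
      ≤ x ⬝ᵥ (∑ s, (exp (δ • Qᵀ) *ᵥ μ) s • P s) *ᵥ x := by
  rw [dotProduct_sum_smul_mulVec, dotProduct_sum_smul_mulVec]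
  set y : ℝ → n → ℝ := fun t => exp (t • A) *ᵥ x
  have hderiv (t : ℝ) : ∀ r, y t ⬝ᵥ (Aᵀ * P r + P r * A) *ᵥ y t
      ≤ (Q *ᵥ fun s => y t ⬝ᵥ P s *ᵥ y t) r := by
    intro r
    have := (hLyap r).dotProduct_mulVec_nonneg (y t)
    rw [star_trivial, sub_mulVec, dotProduct_sub, sub_nonneg, dotProduct_sum_smul_mulVec] at this
    exact this
  simpa [y] using hQ.dotProduct_le_of_hasDerivAt
    (fun t => hasDerivAt_pi.2 fun s => hasDerivAt_dotProduct_exp_smul_mulVec A (P s) x t)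
    hderiv hμ hδ

theorem PosDef.sub_exp_conj_add {A R : Matrix n n ℝ} {P : ι → Matrix n n ℝ}
    {Q : Matrix ι ι ℝ} {μ : ι → ℝ} {τ δ : ℝ}
    (hjump : (∑ s, μ s • P s - exp (τ • Aᵀ) * R * exp (τ • A)).PosDef)
    (hP : ∀ s, (P s).IsSymm) (hR : R.IsSymm) (hQ : Q.IsMetzler)
    (hLyap : ∀ r, (∑ s, Q r s • P s - (Aᵀ * P r + P r * A)).PosSemidef)
    (hμ : 0 ≤ μ) (hδ : 0 ≤ δ) :
    (∑ s, (exp (δ • Qᵀ) *ᵥ μ) s • P s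
      - exp ((τ + δ) • Aᵀ) * R * exp ((τ + δ) • A)).PosDef := by
  have hT (t : ℝ) : exp (t • Aᵀ) = (exp (t • A))ᵀ := by
    rw [← transpose_smul, exp_transpose]
  have hsplit : exp ((τ + δ) • A) = exp (τ • A) * exp (δ • A) := by
    rw [add_smul]
    exact exp_add_of_commute _ _ (((Commute.refl A).smul_left τ).smul_right δ)
  rw [hT] at hjump ⊢
  refine PosDef.of_dotProduct_mulVec_pos ?_ fun x hx => ?_
  · rw [isHermitian_iff_isSymm]
    refine IsSymm.sub ?_ ?_
    · simp [IsSymm, transpose_sum, (hP _).eq]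
    · simp [IsSymm, transpose_mul, hR.eq, Matrix.mul_assoc]
  · have hEx : exp (δ • A) *ᵥ x ≠ 0 := fun h =>
      hx (mulVec_injective_of_isUnit (isUnit_exp _) (h.trans (mulVec_zero _).symm))
    have hold := hjump.dotProduct_mulVec_pos hEx
    rw [star_trivial, sub_mulVec, dotProduct_sub, sub_pos, dotProduct_transpose_mul_mul_mulVec]
      at hold ⊢
    rw [hsplit, ← mulVec_mulVec]
    exact hold.trans_le (dotProduct_exp_smul_mulVec_le hQ hLyap hμ hδ x)

end QuadraticForm

end Matrix

section ConvexWeights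

variable {ι M : Type*} [Fintype ι] [DecidableEq ι] [AddCommGroup M] [Module ℝ M]

theorem sum_erase_smul_sub (w : ι → ℝ) (v : ι → M) (r : ι) :
    ∑ s ∈ Finset.univ.erase r, w s • (v s - v r)
      = ∑ s, w s • v s - (∑ s, w s) • v r := by
  rw [Finset.sum_erase _ (by rw [sub_self, smul_zero])]
  simp only [smul_sub, Finset.sum_sub_distrib, Finset.sum_smul]

def convexWeights (γ : ι → ℝ) (r : ι) : ι → ℝ :=
  Function.update γ r (1 - ∑ s ∈ Finset.univ.erase r, γ s)

theorem sum_convexWeights (γ : ι → ℝ) (r : ι) : ∑ s, convexWeights γ r s = 1 := by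
  rw [convexWeights, Finset.sum_update_of_mem (Finset.mem_univ r),
    Finset.sdiff_singleton_eq_erase, sub_add_cancel]

theorem convexWeights_self_pos {γ : ι → ℝ} (hγ : 0 ≤ γ) (hγ1 : ∑ s, γ s < 1) (r : ι) :
    0 < convexWeights γ r r := by
  have := Finset.sum_le_sum_of_subset_of_nonneg (Finset.erase_subset r Finset.univ)
    fun s _ _ => hγ s
  rw [convexWeights, Function.update_self]
  linarith

theorem convexWeights_nonneg {γ : ι → ℝ} (hγ : 0 ≤ γ) (hγ1 : ∑ s, γ s < 1) (r : ι) :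
    0 ≤ convexWeights γ r := fun s => by
  rcases eq_or_ne s r with rfl | hs
  · exact (convexWeights_self_pos hγ hγ1 s).le
  · simpa [convexWeights, hs] using hγ s

theorem convexWeights_update_self (γ : ι → ℝ) (r : ι) (b : ℝ) :
    convexWeights (Function.update γ r b) r = convexWeights γ r := by
  rw [convexWeights, convexWeights, Function.update_idem,
    Finset.sum_update_of_notMem (Finset.notMem_erase r _)]

theorem convexWeights_eq_self {γ : ι → ℝ} (hγ : ∑ s, γ s = 1) (r : ι) :
    convexWeights γ r = γ := by
  rw [convexWeights, Finset.sum_erase_eq_sub (Finset.mem_univ r), hγ, sub_sub_cancel,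
    Function.update_eq_self]

theorem add_sum_erase_smul_sub_eq_sum_convexWeights (γ : ι → ℝ) (v : ι → M) (r : ι) :
    v r + ∑ s ∈ Finset.univ.erase r, γ s • (v s - v r) = ∑ s, convexWeights γ r s • v s := by
  have herase : ∑ s ∈ Finset.univ.erase r, convexWeights γ r s • v s
      = ∑ s ∈ Finset.univ.erase r, γ s • v s :=
    Finset.sum_congr rfl fun s hs => by
      rw [convexWeights, Function.update_of_ne (Finset.ne_of_mem_erase hs)]
  rw [← Finset.add_sum_erase _ _ (Finset.mem_univ r), herase, convexWeights,
    Function.update_self]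
  simp only [smul_sub, Finset.sum_sub_distrib, ← Finset.sum_smul, sub_smul, one_smul]
  abel

end ConvexWeights

section RateMatrix

variable {ι : Type*} [Fintype ι] [DecidableEq ι]

def rateMatrix (α : ι → ι → ℝ) : Matrix ι ι ℝ :=
  Matrix.of α - Matrix.diagonal fun r => ∑ s, α r s

theorem isMetzler_rateMatrix {α : ι → ι → ℝ} (hα : (Matrix.of α).IsMetzler) :
    (rateMatrix α).IsMetzler := fun r s hrs => by
  simpa [rateMatrix, Matrix.diagonal_apply_ne _ hrs] using hα r s hrs

theorem rateMatrix_mulVec_one (α : ι → ι → ℝ) : rateMatrix α *ᵥ 1 = 0 := by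
  ext r
  simp [rateMatrix, Matrix.mulVec, dotProduct, Matrix.diagonal_apply]

theorem sum_rateMatrix_smul {M : Type*} [AddCommGroup M] [Module ℝ M] (α : ι → ι → ℝ)
    (v : ι → M) (r : ι) :
    ∑ s, rateMatrix α r s • v s = ∑ s ∈ Finset.univ.erase r, α r s • (v s - v r) := by
  rw [sum_erase_smul_sub]
  simp [rateMatrix, sub_smul, Finset.sum_sub_distrib, Matrix.diagonal_apply]

end RateMatrix

section Fibers

variable {ι κ M : Type*} [Fintype ι] [Fintype κ] [DecidableEq κ] [AddCommGroup M]
  [Module ℝ M] {e : ι → κ}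

theorem sum_inv_card_fiber_smul (he : e.Surjective) (f : κ → M) :
    ∑ i, ((Finset.univ.filter (e · = e i)).card : ℝ)⁻¹ • f (e i) = ∑ k, f k := by
  rw [Finset.sum_comp (fun k => ((Finset.univ.filter (e · = k)).card : ℝ)⁻¹ • f k) e,
    Finset.image_univ_of_surjective he]
  refine Finset.sum_congr rfl fun k _ => ?_
  obtain ⟨i, rfl⟩ := he k
  have hcard : ((Finset.univ.filter (e · = e i)).card : ℝ) ≠ 0 :=
    Nat.cast_ne_zero.2 (Finset.card_ne_zero.2 ⟨i, by simp⟩)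
  rw [← Nat.cast_smul_eq_nsmul ℝ, smul_smul, mul_inv_cancel₀ hcard, one_smul]

theorem sum_erase_inv_card_fiber_mul_smul_sub [DecidableEq ι] (he : e.Surjective) (w : κ → ℝ)
    (v : κ → M) (r : ι) :
    ∑ s ∈ Finset.univ.erase r,
        (((Finset.univ.filter (e · = e s)).card : ℝ)⁻¹ * w (e s)) • (v (e s) - v (e r))
      = ∑ k ∈ Finset.univ.erase (e r), w k • (v k - v (e r)) := by
  rw [Finset.sum_erase _ (by rw [sub_self, smul_zero]),
    Finset.sum_erase _ (by rw [sub_self, smul_zero])]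
  simp_rw [mul_smul]
  exact sum_inv_card_fiber_smul he fun k => w k • (v k - v (e r))

end Fibers

section Feasibility

variable {n N m : ℕ} {A : Fin N → Matrix (Fin n) (Fin n) ℝ} {τ : ℝ}

theorem BMIFeasible.of_surjective {m' : ℕ} {e : Fin m' → Fin m} (he : e.Surjective)
    (h : BMIFeasible A m τ) : BMIFeasible A m' τ := by
  obtain ⟨hτ, P, α, γ, hsym, hpd, hα, hγ, hγ1, hLyap, hjump⟩ := h
  set c : Fin m' → ℝ := fun s => ((Finset.univ.filter (e · = e s)).card : ℝ)⁻¹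
  have hc (s : Fin m') : 0 < c s :=
    inv_pos.2 (Nat.cast_pos.2 (Finset.card_pos.2 ⟨s, by simp⟩))
  refine ⟨hτ, fun i q => P i (e q), fun i r s => c s * α i (e r) (e s),
    fun j q i r s => c s * γ j (e q) i (e r) (e s), fun i r => hsym i (e r),
    fun i r => hpd i (e r), fun i r s => mul_pos (hc s) (hα ..),
    fun j q i r s => mul_nonneg (hc s).le (hγ ..), fun j q i r => ?_, fun i r => ?_,
    fun i j hij q r => ?_⟩
  · simpa only [c, smul_eq_mul] using
      (sum_inv_card_fiber_smul he (γ j (e q) i (e r))).trans_lt (hγ1 j (e q) i (e r))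
  · rw [sum_erase_inv_card_fiber_mul_smul_sub he]
    exact hLyap i (e r)
  · rw [sum_erase_inv_card_fiber_mul_smul_sub he]
    exact hjump i j hij (e q) (e r)

theorem BMIFeasible.mono {m' : ℕ} (hm : 0 < m) (hmm' : m ≤ m') (h : BMIFeasible A m τ) :
    BMIFeasible A m' τ :=
  h.of_surjective (e := fun s => ⟨s % m, Nat.mod_lt _ hm⟩)
    fun k => ⟨⟨k, k.2.trans_le hmm'⟩, Fin.ext (Nat.mod_eq_of_lt k.2)⟩

theorem BMIFeasible.add {δ : ℝ} (h : BMIFeasible A m τ) (hδ : 0 ≤ δ) :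
    BMIFeasible A m (τ + δ) := by
  obtain ⟨hτ, P, α, γ, hsym, hpd, hα, hγ, hγ1, hLyap, hjump⟩ := h
  have hμ (j q i r) := convexWeights_nonneg (hγ j q i r) (hγ1 j q i r) r
  have hQ (i) : (rateMatrix (α i)).IsMetzler := isMetzler_rateMatrix fun r s _ => (hα i r s).le
  set S : Fin N → Matrix (Fin m) (Fin m) ℝ := fun i => exp (δ • (rateMatrix (α i))ᵀ)
  have hS (i) : S i ∈ colStochastic ℝ (Fin m) := by
    rw [show S i = (exp (δ • rateMatrix (α i)))ᵀ by rw [← exp_transpose, transpose_smul]]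
    exact transpose_mem_colStochastic_iff_mem_rowStochastic.2
      ((hQ i).exp_smul_mem_rowStochastic (rateMatrix_mulVec_one _) hδ)
  set lam := fun j q i r => S i *ᵥ convexWeights (γ j q i r) r
  have hlam_sum (j q i r) : ∑ s, lam j q i r s = 1 :=
    (sum_mulVec_of_mem_colStochastic (hS i)).trans (sum_convexWeights _ r)
  have hlam_self (j q i r) : 0 < lam j q i r r :=
    (mul_pos (((hQ i).transpose.smul hδ).exp_apply_self_pos r)
      (convexWeights_self_pos (hγ j q i r) (hγ1 j q i r) r)).trans_le
      (mul_apply_self_le_mulVec_apply (S := S i)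
        (fun _ _ => nonneg_of_mem_colStochastic (hS i)) (hμ j q i r) r)
  -- `γ r` does not enter the jump inequality; `0` there makes `∑ s, γ s = 1 - lam r < 1`.
  refine ⟨add_nonneg hτ hδ, P, α, fun j q i r => Function.update (lam j q i r) r 0, hsym, hpd,
    hα, fun j q i r s => ?_, fun j q i r => ?_, hLyap, fun i j hij q r => ?_⟩
  · rcases eq_or_ne s r with rfl | hs
    · simp
    · simpa [hs] using nonneg_mulVec_of_mem_colStochastic (hS i) (hμ j q i r) s
  · rw [Finset.sum_update_of_mem (Finset.mem_univ r), Finset.sdiff_singleton_eq_erase, zero_add,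
      Finset.sum_erase_eq_sub (Finset.mem_univ r), hlam_sum]
    linarith [hlam_self j q i r]
  · have hjump' := hjump i j hij q r
    rw [add_sum_erase_smul_sub_eq_sum_convexWeights] at hjump'
    rw [add_sum_erase_smul_sub_eq_sum_convexWeights, convexWeights_update_self,
      convexWeights_eq_self (hlam_sum j q i r)]
    exact hjump'.sub_exp_conj_add (hsym i) (hsym j q) (hQ i)
      (fun r => by rw [sum_rateMatrix_smul]; exact (hLyap i r).posSemidef) (hμ j q i r) hδ

end Feasibility

theorem tauBound_nonneg {n N : ℕ} (A : Fin N → Matrix (Fin n) (Fin n) ℝ) (m : ℕ) :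
    0 ≤ tauBound A m :=
  le_sInf <| by
    rintro _ ⟨τ, hτ, rfl⟩
    exact EReal.coe_nonneg.2 hτ.1

theorem tauBound_le_of_le {n N m m' : ℕ} {A : Fin N → Matrix (Fin n) (Fin n) ℝ} (hm : 0 < m)
    (hmm' : m ≤ m') : tauBound A m' ≤ tauBound A m :=
  sInf_le_sInf (Set.image_mono fun _ hτ => BMIFeasible.mono hm hmm' hτ)

/-- (a) the feasible sets are nested in `m`, hence `τ_[m]` is
non-increasing; (b) each feasible set is upward closed; (c) if some feasible set is
nonempty, the sequence `τ_[m]` is bounded below by `0` and converges. -/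
theorem tauBound_monotone_and_convergent
    (n N : ℕ) (A : Fin N → Matrix (Fin n) (Fin n) ℝ) :
    (∀ m : ℕ, 0 < m →
      {τ : ℝ | BMIFeasible A m τ} ⊆ {τ : ℝ | BMIFeasible A (m + 1) τ}) ∧
    (∀ m : ℕ, 0 < m → tauBound A (m + 1) ≤ tauBound A m) ∧
    (∀ m : ℕ, 0 < m → ∀ τ : ℝ, BMIFeasible A m τ → ∀ δ : ℝ, 0 ≤ δ →
      BMIFeasible A m (τ + δ)) ∧
    ((∃ m : ℕ, 0 < m ∧ {τ : ℝ | BMIFeasible A m τ}.Nonempty) →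
      (∀ m : ℕ, 0 < m → (0 : EReal) ≤ tauBound A m) ∧
      ∃ L : EReal, Filter.Tendsto (fun m : ℕ => tauBound A m)
        Filter.atTop (nhds L)) := by
  have hanti : Antitone fun k => tauBound A (k + 1) := fun k _ hkl =>
    tauBound_le_of_le k.succ_pos (Nat.succ_le_succ hkl)
  refine ⟨fun m hm _ hτ => hτ.mono hm m.le_succ, fun m hm => tauBound_le_of_le hm m.le_succ,
    fun _ _ _ hτ _ hδ => hτ.add hδ, fun _ => ⟨fun m _ => tauBound_nonneg A m, _,
    (Filter.tendsto_add_atTop_iff_nat 1).1 (tendsto_atTop_iInf hanti)⟩⟩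
end
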